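/- Let L(z) = M_T(z/2)·M_V(z)·M_T(z/2) be the leapfrog matrix for the harmonic oscillator, let α = 1/2 + (√3/6)·i, and let R(h) be the entrywise real part of L(α h)·L(conj(α) h). Then (fun h : ℝ => det R(h) − 1) is O(h⁸) as h → 0; that is, the projected fourth-order method R̂⁴ is pseudo-symplectic of order 7 for the harmonic oscillator. -/

import Mathlib

open Matrix Asymptotics Filter

attribute [local instance] Matrix.normedAddCommGroup Matrix.normedSpace

/-- Exact evolution matrix of the harmonic oscillator `q' = p`, `p' = -q`. -/
noncomputable def MH (z : ℂ) : Matrix (Fin 2) (Fin 2) ℂ :=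
  !![Complex.cos z, Complex.sin z; -Complex.sin z, Complex.cos z]

/-- Exact evolution matrix of the kinetic part. -/
def MT (z : ℂ) : Matrix (Fin 2) (Fin 2) ℂ := !![1, z; 0, 1]

/-- Exact evolution matrix of the potential part. -/
def MV (z : ℂ) : Matrix (Fin 2) (Fin 2) ℂ := !![1, 0; -z, 1]

/-- The leapfrog/Strang splitting matrix. -/
noncomputable def L (z : ℂ) : Matrix (Fin 2) (Fin 2) ℂ := MT (z / 2) * MV z * MT (z / 2)

/-- The coefficient `α = 1/2 + (√3/6) i`. -/
noncomputable def αc : ℂ := 1 / 2 + (Real.sqrt 3 / 6 : ℝ) * Complex.I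

/-- The real projection of the composition `S_{αh} ∘ S_{ᾱh}`. -/
noncomputable def Rproj (h : ℝ) : Matrix (Fin 2) (Fin 2) ℝ :=
  (L (αc * (h : ℂ)) * L (starRingEnd ℂ αc * (h : ℂ))).map Complex.re

open ComplexConjugate

/-!
Since `L` has real coefficients and the two stages use conjugate step sizes `x = αh` and
`x̄ = ᾱh`, the real part of `L x * L x̄` is the symmetrized product
`(L x * L x̄ + L x̄ * L x) / 2`.
Its entries are symmetric polynomials in `x, x̄`, hence polynomials in `x + x̄ = h` and
`x x̄ = |α|² h² = h² / 3`. This gives `R(h)` in closed form, and its determinant is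
exactly `1 - h⁸ / 1728`.
-/

lemma L_eq (z : ℂ) : L z = !![1 - z ^ 2 / 2, z - z ^ 3 / 4; -z, 1 - z ^ 2 / 2] := by
  ext i j
  fin_cases i <;> fin_cases j <;> simp [L, MT, MV, Matrix.mul_apply] <;> ring

lemma L_conj (z : ℂ) : L (conj z) = (L z).map conj := by
  ext i j
  fin_cases i <;> fin_cases j <;> simp [L_eq, map_ofNat]

lemma half_smul_L_mul_add_L_mul (x y : ℂ) :
    (1 / 2 : ℂ) • (L x * L y + L y * L x) =
      !![1 - (x + y) ^ 2 / 2 + x * y * (x + y) ^ 2 / 8,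
          (x + y) - (x + y) ^ 3 / 4 + x * y * (x + y) / 4 + (x * y) ^ 2 * (x + y) / 8;
        -(x + y) + x * y * (x + y) / 2, 1 - (x + y) ^ 2 / 2 + x * y * (x + y) ^ 2 / 8] := by
  ext i j
  fin_cases i <;> fin_cases j <;> simp [L_eq] <;> ring

lemma Matrix.ofReal_map_re_eq_add_conj {m n : Type*} (A : Matrix m n ℂ) :
    (A.map Complex.re).map Complex.ofReal = (1 / 2 : ℂ) • (A + A.map conj) := by
  ext i j
  simp [Complex.re_eq_add_conj, div_eq_inv_mul]

lemma αc_add_conj : αc + conj αc = 1 := by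
  rw [Complex.add_conj]
  simp [αc]

lemma αc_mul_conj : αc * conj αc = 1 / 3 := by
  have hsqrt : √3 * √3 = 3 := Real.mul_self_sqrt (by norm_num)
  have hnormSq : Complex.normSq αc = 1 / 3 := by
    rw [Complex.normSq_apply]
    simp only [αc, Complex.add_re, Complex.add_im, Complex.ofReal_re, Complex.ofReal_im,
      Complex.mul_re, Complex.mul_im, Complex.I_re, Complex.I_im]
    norm_num
    linear_combination hsqrt / 36
  rw [Complex.mul_conj, hnormSq]
  norm_num

lemma Rproj_eq (h : ℝ) : Rproj h =
    !![1 - h ^ 2 / 2 + h ^ 4 / 24, h - h ^ 3 / 6 + h ^ 5 / 72;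
      -h + h ^ 3 / 6, 1 - h ^ 2 / 2 + h ^ 4 / 24] := by
  refine Matrix.map_injective Complex.ofReal_injective ?_
  dsimp only
  set x : ℂ := αc * h
  have hx : conj αc * h = conj x := by simp [x]
  have hs : x + conj x = h := by
    rw [← hx]; linear_combination (h : ℂ) * αc_add_conj
  have hp : x * conj x = (h : ℂ) ^ 2 / 3 := by
    rw [← hx]; linear_combination (h : ℂ) ^ 2 * αc_mul_conj
  have hsym : (Rproj h).map Complex.ofReal =
      (1 / 2 : ℂ) • (L x * L (conj x) + L (conj x) * L x) := by
    rw [Rproj, hx, Matrix.ofReal_map_re_eq_add_conj, Matrix.map_mul, ← L_conj, ← L_conj,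
      Complex.conj_conj]
  rw [hsym, half_smul_L_mul_add_L_mul, hs, hp]
  ext i j
  fin_cases i <;> fin_cases j <;> simp <;> ring

lemma det_Rproj (h : ℝ) : (Rproj h).det = 1 - h ^ 8 / 1728 := by
  rw [Rproj_eq, Matrix.det_fin_two_of]
  ring

/-- the projected fourth-order method `R̂⁴` is pseudo-symplectic
of order 7 for the harmonic oscillator. -/
theorem projected_two_stage_composition_pseudo_symplectic_order_seven :
    (fun h : ℝ => (Rproj h).det - 1) =O[nhds 0] fun h : ℝ => h ^ 8 := by
  have hdet : (fun h : ℝ => (Rproj h).det - 1) = fun h : ℝ => -(1 / 1728) * h ^ 8 := by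
    funext h
    rw [det_Rproj]
    ring
  rw [hdet]
  exact (isBigO_refl _ _).const_mul_left _
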